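/- arXiv:0803.3956 — 5 statements merged into one kernel-verified Lean document; each statement's English description precedes it below -/
import Mathlib

section
/- Let b, c be integers with b^2 - 4c ≠ 0. Then (x,y) ∈ ℤ × ℤ satisfies x^2 + bx + c = y^2 if and only if there exist integers δ1, δ2 with δ1·δ2 = b^2 - 4c, δ1 + δ2 ≥ 0, δ1 ≡ δ2 (mod 4), x = (-2b + (δ1+δ2))/4 or x = (-2b - (δ1+δ2))/4, and y = (δ1-δ2)/4. -/
theorem stmt_3 (b c : ℤ) (h : b^2 - 4*c ≠ 0) (x y : ℤ) :
    x^2 + b*x + c = y^2 ↔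
      ∃ δ1 δ2 : ℤ, δ1 * δ2 = b^2 - 4*c ∧ 0 ≤ δ1 + δ2 ∧ δ1 ≡ δ2 [ZMOD 4] ∧
        (4*x = -2*b + (δ1 + δ2) ∨ 4*x = -2*b - (δ1 + δ2)) ∧ 4*y = δ1 - δ2 := by
  constructor
  · intro hxy
    rcases le_or_gt 0 (2*x + b) with hu | hu
    · refine ⟨(2*x+b) + 2*y, (2*x+b) - 2*y, by nlinarith, by linarith,
        by unfold Int.ModEq; omega, Or.inl (by ring), by ring⟩
    · refine ⟨2*y - (2*x+b), -(2*y + (2*x+b)), by nlinarith, by linarith,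
        by unfold Int.ModEq; omega, Or.inr (by ring), by ring⟩
  · rintro ⟨δ1, δ2, hm, _, _, (hx | hx), hy⟩ <;>
      [ (have h16 : 16*(x^2 + b*x + c) = 16*y^2 := by
          linear_combination (4*x + 2*b + (δ1+δ2)) * hx - (4*y + (δ1-δ2)) * hy + 4*hm);
        (have h16 : 16*(x^2 + b*x + c) = 16*y^2 := by
          linear_combination (4*x + 2*b - (δ1+δ2)) * hx - (4*y + (δ1-δ2)) * hy + 4*hm)] <;>
      linarith
end

section
/- Let b, c be integers with b^2 - 4c ≠ 0. Then the set of integer solutions (x,y) of x^2 + bx + c = y^2 is finite and has even cardinality. -/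
lemma even_card_of_invol {α : Type*} [DecidableEq α] (g : α → α)
    (hg : ∀ a, g (g a) = a) :
    ∀ n (S : Finset α), S.card = n → (∀ a ∈ S, g a ∈ S) → (∀ a ∈ S, g a ≠ a) →
      Even S.card := by
  intro n
  induction n using Nat.strong_induction_on with
  | _ n ih =>
    intro S hcard hmap hfix
    rcases S.eq_empty_or_nonempty with rfl | ⟨a, ha⟩
    · simp
    · have hga : g a ∈ S := hmap a ha
      have hne : g a ≠ a := hfix a ha
      set T : Finset α := S \ {a, g a} with hT
      have hsub : ({a, g a} : Finset α) ⊆ S := by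
        intro x hx
        simp only [Finset.mem_insert, Finset.mem_singleton] at hx
        rcases hx with rfl | rfl <;> assumption
      have hcard2 : ({a, g a} : Finset α).card = 2 := by
        rw [Finset.card_insert_of_notMem (by simpa using hne.symm)]
        simp
      have hTcard : T.card = S.card - 2 := by
        rw [hT, Finset.card_sdiff_of_subset hsub, hcard2]
      have hpos : 2 ≤ S.card := by
        calc 2 = ({a, g a} : Finset α).card := hcard2.symm
        _ ≤ S.card := Finset.card_le_card hsub
      have hmem : ∀ x, x ∈ T ↔ x ∈ S ∧ x ≠ a ∧ x ≠ g a := by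
        intro x; simp [hT, and_assoc]
      have hEvenT : Even T.card := by
        refine ih T.card ?_ T rfl ?_ ?_
        · omega
        · intro x hx
          rw [hmem] at hx ⊢
          obtain ⟨hxS, hxa, hxga⟩ := hx
          refine ⟨hmap x hxS, ?_, ?_⟩
          · intro hxe; apply hxga
            have := congrArg g hxe; rwa [hg] at this
          · intro hxe; apply hxa
            have := congrArg g hxe; rwa [hg, hg] at this
        · intro x hx; exact hfix x ((hmem x).mp hx).1
      have : S.card = T.card + 2 := by omega
      rw [this]
      exact hEvenT.add (by norm_num)

theorem stmt_8 (b c : ℤ) (h : b^2 - 4*c ≠ 0) :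
    ∃ S : Finset (ℤ × ℤ), (∀ p : ℤ × ℤ, p ∈ S ↔ p.1^2 + b*p.1 + c = p.2^2) ∧ Even S.card := by
  set d : ℤ := b^2 - 4*c with hd
  set B : ℤ := |d| + |b| with hB
  set S : Finset (ℤ × ℤ) :=
    ((Finset.Icc (-B) B) ×ˢ (Finset.Icc (-B) B)).filter
      (fun p => p.1^2 + b*p.1 + c = p.2^2) with hS
  have hdpos : 0 < |d| := abs_pos.mpr h
  have hmem : ∀ p : ℤ × ℤ, p ∈ S ↔ p.1^2 + b*p.1 + c = p.2^2 := by
    intro ⟨x, y⟩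
    simp only [hS, Finset.mem_filter, Finset.mem_product, Finset.mem_Icc]
    constructor
    · rintro ⟨_, heq⟩; exact heq
    · intro heq
      refine ⟨⟨⟨?_, ?_⟩, ?_, ?_⟩, heq⟩ <;>
      · -- bounds: (2x+b-2y)(2x+b+2y) = d
        have key : (2*x + b - 2*y) * (2*x + b + 2*y) = d := by
          have : x^2 + b*x + c = y^2 := heq
          ring_nf
          nlinarith [this]
        have hu : (2*x + b - 2*y) ∣ d := ⟨_, key.symm⟩
        have hv : (2*x + b + 2*y) ∣ d := ⟨2*x + b - 2*y, by rw [← key]; ring⟩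
        have hub : |2*x + b - 2*y| ≤ |d| :=
          Int.le_of_dvd hdpos ((abs_dvd _ _).mpr ((dvd_abs _ _).mpr hu))
        have hvb : |2*x + b + 2*y| ≤ |d| :=
          Int.le_of_dvd hdpos ((abs_dvd _ _).mpr ((dvd_abs _ _).mpr hv))
        have h1 := abs_le.mp hub
        have h2 := abs_le.mp hvb
        have hb := abs_nonneg b
        have hbb := le_abs_self b
        have hbb' := neg_abs_le b
        · rw [hB]; obtain ⟨hu1, hu2⟩ := h1; obtain ⟨hv1, hv2⟩ := h2; linarith
  refine ⟨S, hmem, ?_⟩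
  refine even_card_of_invol (fun p => (-b - p.1, -p.2)) (fun p => by simp)
    S.card S rfl ?_ ?_
  · intro ⟨x, y⟩ hp
    rw [hmem] at hp ⊢
    simp only at hp ⊢
    ring_nf
    ring_nf at hp
    linarith
  · intro ⟨x, y⟩ hp hfix
    rw [hmem] at hp
    simp only [Prod.mk.injEq] at hfix
    obtain ⟨hx, hy⟩ := hfix
    have hy0 : y = 0 := by linarith [hy.symm ▸ (rfl : -y = -y)]
    apply h
    have hx2 : 2*x = -b := by linarith [hx]
    nlinarith [hp, hy0, hx2]
end

section
/- Let p be an odd prime and n a positive integer, and let b, c be integers with b^2 - 4c = p^(n-1). Then the diophantine equation x^2 + bx + c = y^2 has exactly 2n integer solutions (x,y). -/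
theorem stmt_10 (p : ℕ) (hp : p.Prime) (hodd : Odd p) (n : ℕ) (hn : 0 < n)
    (b c : ℤ) (h : b^2 - 4*c = (p : ℤ)^(n-1)) :
    {q : ℤ × ℤ | q.1^2 + b*q.1 + c = q.2^2}.ncard = 2*n := by
  set m := n - 1 with hm
  have hpodd : Odd ((p:ℤ)^m) := by
    have : Odd (p:ℤ) := by exact_mod_cast hodd
    exact this.pow
  -- b is odd
  have hb : Odd b := by
    have h1 : Odd (b^2) := by
      have hb2 : b^2 = (p:ℤ)^m + 4*c := by linarith [h]
      rw [hb2]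
      exact hpodd.add_even ⟨2*c, by ring⟩
    rcases Int.even_or_odd b with he | ho
    · exact absurd (Int.even_pow.mpr ⟨he, by norm_num⟩) (Int.not_even_iff_odd.mpr h1)
    · exact ho
  obtain ⟨t, ht⟩ := hb
  obtain ⟨E, hE⟩ : ∃ E, (p:ℤ)^m = 4*E + 1 := ⟨t^2 + t - c, by rw [← h, ht]; ring⟩
  set Φ : ℤ × ℤ → ℤ := fun q => 2*q.1 + b - 2*q.2 with hΦ
  set S : Set (ℤ×ℤ) := {q : ℤ × ℤ | q.1^2 + b*q.1 + c = q.2^2} with hS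
  set D : Set ℤ := {z : ℤ | z ∣ (p:ℤ)^m} with hD
  have hpne : ((p:ℤ))^m ≠ 0 := pow_ne_zero _ (by exact_mod_cast hp.pos.ne')
  have hbij : Set.BijOn Φ S D := by
    refine ⟨?_, ?_, ?_⟩
    · rintro ⟨x, y⟩ hq
      simp only [hS, Set.mem_setOf_eq] at hq
      exact ⟨2*x + b + 2*y, by linear_combination -h - 4*hq⟩
    · rintro ⟨x, y⟩ hx ⟨x', y'⟩ hy heq
      simp only [hS, Set.mem_setOf_eq] at hx hy
      simp only [hΦ] at heq
      have e1 : (2*x + b - 2*y) * (2*x + b + 2*y) = (p:ℤ)^m := by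
        linear_combination h + 4*hx
      have e2 : (2*x' + b - 2*y') * (2*x' + b + 2*y') = (p:ℤ)^m := by
        linear_combination h + 4*hy
      have hune : 2*x + b - 2*y ≠ 0 := by
        intro h0
        rw [h0, zero_mul] at e1
        exact hpne e1.symm
      have hv : 2*x + b + 2*y = 2*x' + b + 2*y' := by
        apply mul_left_cancel₀ hune
        rw [e1]
        rw [heq] at *
        rw [e2]
      simp only [Prod.mk.injEq]
      constructor <;> omega
    · intro z hz
      simp only [hD, Set.mem_setOf_eq] at hz
      obtain ⟨w, hw⟩ := hz
      have hzw : Odd (z * w) := by rw [← hw, hE]; exact ⟨2*E, by ring⟩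
      obtain ⟨hzo, hwo⟩ := (Int.odd_mul).mp hzw
      obtain ⟨a, ha⟩ := hzo
      obtain ⟨d, hd⟩ := hwo
      have hzw2 : (2*a+1) * (2*d+1) = 4*E + 1 := by
        rw [← ha, ← hd, ← hw, hE]
      obtain ⟨A, hA⟩ : ∃ A, 4*A + 2*a + 2*d = 4*E := ⟨a*d, by linear_combination hzw2⟩
      obtain ⟨y0, hy0⟩ : ∃ y0, w - z = 4*y0 := ⟨(d - a)/2, by omega⟩
      obtain ⟨x0, hx0⟩ : ∃ x0, z + w - 2*b = 4*x0 := ⟨(a + d - 2*t)/2, by omega⟩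
      have hu : z = 2*x0 + b - 2*y0 := by omega
      have hvv : w = 2*x0 + b + 2*y0 := by omega
      have h16 : z * w = b^2 - 4*c := by rw [← hw, ← h]
      rw [hu, hvv] at h16
      refine ⟨(x0, y0), ?_, ?_⟩
      · simp only [hS, Set.mem_setOf_eq]
        have h4 : (4:ℤ) * (x0^2 + b*x0 + c) = 4 * (y0^2) := by linear_combination h16
        exact mul_left_cancel₀ (by norm_num) h4
      · simp only [hΦ]
        omega
  have h1 : S.ncard = D.ncard := by
    rw [← hbij.image_eq]
    exact (Set.ncard_image_of_injOn hbij.injOn).symm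
  have hnm : n = m + 1 := by omega
  set T : Finset ℤ :=
    ((Finset.range n).image fun k => (p:ℤ)^k) ∪ ((Finset.range n).image fun k => -(p:ℤ)^k)
    with hT
  have hDT : D = ↑T := by
    ext z
    simp only [hD, Set.mem_setOf_eq, hT, Finset.coe_union, Set.mem_union, Finset.coe_image,
      Set.mem_image, Finset.mem_coe, Finset.mem_range]
    constructor
    · intro hz
      have hz' : z.natAbs ∣ p^m := by
        have h2 : (z.natAbs : ℤ) ∣ (p:ℤ)^m := Int.natAbs_dvd.mpr hz
        exact_mod_cast h2
      obtain ⟨k, hk, hkz⟩ := (Nat.dvd_prime_pow hp).mp hz'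
      rcases Int.natAbs_eq z with hz1 | hz1
      · left
        refine ⟨k, by omega, ?_⟩
        rw [hz1, hkz]; push_cast; ring
      · right
        refine ⟨k, by omega, ?_⟩
        rw [hz1, hkz]; push_cast; ring
    · rintro (⟨k, hk, rfl⟩ | ⟨k, hk, rfl⟩)
      · have : k ≤ m := by omega
        exact pow_dvd_pow _ this
      · have : k ≤ m := by omega
        exact neg_dvd.mpr (pow_dvd_pow _ this)
  have hinj : Function.Injective fun k : ℕ => (p:ℤ)^k := by
    intro i j hij
    simp only at hij
    exact Nat.pow_right_injective hp.two_le (by exact_mod_cast hij)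
  have hninj : Function.Injective fun k : ℕ => -(p:ℤ)^k := by
    intro i j hij
    simp only [neg_inj] at hij
    exact hinj hij
  have hdisj : Disjoint ((Finset.range n).image fun k => (p:ℤ)^k)
      ((Finset.range n).image fun k => -(p:ℤ)^k) := by
    rw [Finset.disjoint_left]
    rintro z hz1 hz2
    simp only [Finset.mem_image, Finset.mem_range] at hz1 hz2
    obtain ⟨k, _, rfl⟩ := hz1
    obtain ⟨j, _, hj⟩ := hz2
    have hp0 : (0:ℤ) < (p:ℤ) := by exact_mod_cast hp.pos
    have hpos : (0:ℤ) < (p:ℤ)^k := pow_pos hp0 _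
    have hpos' : (0:ℤ) < (p:ℤ)^j := pow_pos hp0 _
    omega
  have hcard : T.card = 2 * n := by
    rw [hT, Finset.card_union_of_disjoint hdisj,
      Finset.card_image_of_injective _ hinj, Finset.card_image_of_injective _ hninj,
      Finset.card_range]
    ring
  calc S.ncard = D.ncard := h1
    _ = T.card := by rw [hDT, Set.ncard_coe_finset]
    _ = 2 * n := hcard
end

section
/- For every positive integer n there exist infinitely many pairs of integers (b, c) such that the equation x^2 + bx + c = y^2 has exactly 2n integer solutions. -/
lemma count_aux (n : ℕ) (hn : 0 < n) (m : ℤ) :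
    {q : ℤ × ℤ | q.1^2 + (2*m)*q.1 + (m^2 - 3^(n-1)) = q.2^2}.ncard = 2*n := by
  set k : ℤ := 3^(n-1) with hk
  have hk0 : k ≠ 0 := by positivity
  have hkodd : Odd k := Odd.pow (by decide)
  set F : ℤ → ℤ × ℤ := fun d => ((k/d + d)/2 - m, (k/d - d)/2) with hF
  -- facts about divisors
  have hfac : ∀ d : ℤ, d ∣ k → ∃ a b : ℤ, d = 2*a+1 ∧ k/d = 2*b+1 ∧ d * (k/d) = k := by
    intro d hd
    have hdne : d ≠ 0 := by
      rintro rfl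
      simp only [zero_dvd_iff] at hd
      exact hk0 hd
    have hde : d * (k / d) = k := Int.mul_ediv_cancel' hd
    have hko : Odd (d * (k / d)) := hde.symm ▸ hkodd
    rw [Int.odd_mul] at hko
    obtain ⟨hdo, heo⟩ := hko
    obtain ⟨a, ha⟩ := hdo
    obtain ⟨b, hb⟩ := heo
    exact ⟨a, b, ha, hb, hde⟩
  -- set equality
  have hset : {q : ℤ × ℤ | q.1^2 + (2*m)*q.1 + (m^2 - k) = q.2^2} = F '' {d : ℤ | d ∣ k} := by
    ext ⟨x, y⟩
    simp only [Set.mem_setOf_eq, Set.mem_image, hF]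
    constructor
    · intro h
      refine ⟨x + m - y, ⟨x + m + y, by ring_nf; linarith⟩, ?_⟩
      have hkeq : k = (x + m - y) * (x + m + y) := by ring_nf; linarith
      have hdne : x + m - y ≠ 0 := by
        intro h0
        rw [h0] at hkeq
        simp at hkeq
        exact hk0 hkeq
      have he : k / (x + m - y) = x + m + y := by
        rw [hkeq]
        exact Int.mul_ediv_cancel_left _ hdne
      rw [he]
      simp only [Prod.mk.injEq]
      constructor <;> omega
    · rintro ⟨d, hd, heq⟩
      obtain ⟨a, b, ha, hb, hde⟩ := hfac d hd
      simp only [Prod.mk.injEq] at heq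
      obtain ⟨hx, hy⟩ := heq
      have h1 : (k/d + d)/2 = a + b + 1 := by omega
      have h2 : (k/d - d)/2 = b - a := by omega
      rw [← hx, ← hy, h1, h2]
      have hk' : (2*a+1) * (2*b+1) = k := by rw [← ha, ← hb] at *; exact hde
      linear_combination hk'
  have hinj : Set.InjOn F {d : ℤ | d ∣ k} := by
    intro d hd d' hd' heq
    obtain ⟨a, b, ha, hb, hde⟩ := hfac d hd
    obtain ⟨a', b', ha', hb', hde'⟩ := hfac d' hd'
    simp only [hF, Prod.mk.injEq] at heq
    obtain ⟨h1, h2⟩ := heq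
    omega
  -- the finset of divisors
  set Dfin : Finset ℤ := ((3^(n-1) : ℕ).divisors).image (fun m : ℕ => (m:ℤ)) ∪
      ((3^(n-1) : ℕ).divisors).image (fun m : ℕ => -(m:ℤ)) with hDfin
  have hDset : (↑Dfin : Set ℤ) = {d : ℤ | d ∣ k} := by
    ext d
    simp only [hDfin, Finset.coe_union, Set.mem_union, Finset.coe_image,
      Set.mem_image, Finset.mem_coe, Nat.mem_divisors, Set.mem_setOf_eq]
    constructor
    · rintro (⟨c, ⟨hc, _⟩, rfl⟩ | ⟨c, ⟨hc, _⟩, rfl⟩)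
      · rw [hk]; exact_mod_cast hc
      · rw [hk]
        have hcc : (c:ℤ) ∣ (3:ℤ)^(n-1) := by exact_mod_cast hc
        exact hcc.neg_left
    · intro hd
      have h3 : (3:ℤ)^(n-1) = ((3^(n-1) : ℕ) : ℤ) := by push_cast; ring
      have hna : d.natAbs ∣ 3^(n-1) := by
        have h4 := Int.natAbs_dvd_natAbs.mpr hd
        have hk' : k.natAbs = 3^(n-1) := by
          rw [hk, Int.natAbs_pow]
          norm_num
        rwa [hk'] at h4
      have hne : (3:ℕ)^(n-1) ≠ 0 := by positivity
      rcases Int.natAbs_eq d with h | h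
      · exact Or.inl ⟨d.natAbs, ⟨hna, hne⟩, h.symm⟩
      · exact Or.inr ⟨d.natAbs, ⟨hna, hne⟩, h.symm⟩
  have hcard : Dfin.card = 2 * n := by
    have hdisj : Disjoint (((3^(n-1) : ℕ).divisors).image (fun m : ℕ => (m:ℤ)))
        (((3^(n-1) : ℕ).divisors).image (fun m : ℕ => -(m:ℤ))) := by
      rw [Finset.disjoint_left]
      rintro x hx hx'
      simp only [Finset.mem_image, Nat.mem_divisors] at hx hx'
      obtain ⟨c, ⟨hc, _⟩, rfl⟩ := hx
      obtain ⟨c', ⟨hc', _⟩, he⟩ := hx'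
      have hcpos : 0 < c := Nat.pos_of_dvd_of_pos hc (by positivity)
      have hc'pos : 0 < c' := Nat.pos_of_dvd_of_pos hc' (by positivity)
      omega
    have hc1 : (((3^(n-1) : ℕ).divisors).image (fun m : ℕ => (m:ℤ))).card = n := by
      rw [Finset.card_image_of_injective _ (fun a b h => by exact_mod_cast h)]
      rw [Nat.divisors_prime_pow (by norm_num)]
      simp [Finset.card_map]
      omega
    have hc2 : (((3^(n-1) : ℕ).divisors).image (fun m : ℕ => -(m:ℤ))).card = n := by
      rw [Finset.card_image_of_injective _ (fun a b h => by
        simp only [neg_inj] at h; exact_mod_cast h)]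
      rw [Nat.divisors_prime_pow (by norm_num)]
      simp [Finset.card_map]
      omega
    rw [hDfin, Finset.card_union_of_disjoint hdisj, hc1, hc2]
    ring
  rw [hset, ← hDset, Set.ncard_image_of_injOn (by rw [hDset] at *; exact hinj),
    Set.ncard_coe_finset, hcard]

theorem stmt_11 (n : ℕ) (hn : 0 < n) :
    {bc : ℤ × ℤ | {q : ℤ × ℤ | q.1^2 + bc.1*q.1 + bc.2 = q.2^2}.ncard = 2*n}.Infinite := by
  apply Set.infinite_of_injective_forall_mem
    (f := fun m : ℤ => ((2*m, m^2 - 3^(n-1)) : ℤ × ℤ))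
  · intro a b h
    simp only [Prod.mk.injEq] at h
    linarith [h.1]
  · intro m
    simp only [Set.mem_setOf_eq]
    exact count_aux n hn m
end

section
/- Let b, c be integers with b^2 - 4c ≠ 0. The equation x^2 + bx + c = y^2 has exactly two integer solutions if and only if b^2 - 4c ∈ {1, 4, 16, -4, -16}. -/
private lemma h3ne {α : Type*} {s : Set α} {a1 a2 a3 : α} (m1 : a1 ∈ s) (m2 : a2 ∈ s)
    (m3 : a3 ∈ s) (d12 : a1 ≠ a2) (d13 : a1 ≠ a3) (d23 : a2 ≠ a3) (hn : s.ncard = 2) :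
    False := by
  obtain ⟨p, q, hpq, rfl⟩ := Set.ncard_eq_two.mp hn
  simp only [Set.mem_insert_iff, Set.mem_singleton_iff] at m1 m2 m3
  rcases m1 with rfl | rfl <;> rcases m2 with rfl | rfl <;> rcases m3 with rfl | rfl <;> simp_all

private lemma sqd1 (m y : ℤ) (h : m^2 - y^2 = 1) : (m = 1 ∨ m = -1) ∧ y = 0 := by
  have h1 : (m - y) * (m + y) = 1 := by linear_combination h
  rcases Int.mul_eq_one_iff_eq_one_or_neg_one.mp h1 with ⟨u, v⟩ | ⟨u, v⟩ <;> constructor <;> omega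

private lemma sqd4 (m y : ℤ) (h : m^2 - y^2 = 4) : (m = 2 ∨ m = -2) ∧ y = 0 := by
  have h1 : (m - y) * (m + y) = 4 := by linear_combination h
  have hd : (m - y) ∣ 4 := ⟨m + y, h1.symm⟩
  have hub : m - y ≤ 4 := Int.le_of_dvd (by norm_num) hd
  have hlb : -4 ≤ m - y := by
    have := Int.le_of_dvd (show (0:ℤ) < 4 by norm_num) ((neg_dvd).mpr hd)
    omega
  obtain ⟨a, ha⟩ : ∃ a, m - y = a := ⟨_, rfl⟩
  rw [ha] at h1 hub hlb
  interval_cases a <;> omega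

private lemma mod4ne2 (M Y N : ℤ) (h : M^2 - Y^2 = N) : N % 4 ≠ 2 := by
  intro hN
  obtain ⟨a, ha⟩ : ∃ a, M = 2*a ∨ M = 2*a+1 := ⟨M/2, by omega⟩
  obtain ⟨d, hd⟩ : ∃ d, Y = 2*d ∨ Y = 2*d+1 := ⟨Y/2, by omega⟩
  rcases ha with rfl | rfl <;> rcases hd with rfl | rfl
  · obtain ⟨K, hK⟩ : ∃ K, N = 4*K := ⟨a^2 - d^2, by linear_combination -h⟩
    omega
  · obtain ⟨K, hK⟩ : ∃ K, N = 4*K - 1 := ⟨a^2 - d^2 - d, by linear_combination -h⟩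
    omega
  · obtain ⟨K, hK⟩ : ∃ K, N = 4*K + 1 := ⟨a^2 + a - d^2, by linear_combination -h⟩
    omega
  · obtain ⟨K, hK⟩ : ∃ K, N = 4*K := ⟨a^2 + a - d^2 - d, by linear_combination -h⟩
    omega

theorem stmt_16 (b c : ℤ) (h : b^2 - 4*c ≠ 0) :
    {q : ℤ × ℤ | q.1^2 + b*q.1 + c = q.2^2}.ncard = 2 ↔
      b^2 - 4*c = 1 ∨ b^2 - 4*c = 4 ∨ b^2 - 4*c = 16 ∨ b^2 - 4*c = -4 ∨ b^2 - 4*c = -16 := by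
  constructor
  · intro hn
    by_contra hcon
    push_neg at hcon
    obtain ⟨e1, e4, e16, em4, em16⟩ := hcon
    rcases Int.even_or_odd b with ⟨k, rfl⟩ | ⟨k, rfl⟩
    · -- b = k + k
      obtain ⟨E, rfl⟩ : ∃ E, c = k*k - E := ⟨k*k - c, by ring⟩
      have hE0 : E ≠ 0 := fun hE => h (by subst hE; ring)
      have hE1 : E ≠ 1 := fun hE => e4 (by subst hE; ring)
      have hEm1 : E ≠ -1 := fun hE => em4 (by subst hE; ring)
      have hE4 : E ≠ 4 := fun hE => e16 (by subst hE; ring)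
      have hEm4 : E ≠ -4 := fun hE => em16 (by subst hE; ring)
      have hpar : E % 2 = 1 ∨ E % 4 = 0 ∨ E % 4 = 2 := by omega
      rcases hpar with hpar | hpar | hpar
      · -- E odd
        obtain ⟨j, rfl⟩ : ∃ j, E = 2*j + 1 := ⟨E/2, by omega⟩
        have hj0 : j ≠ 0 := by omega
        have hjm1 : j ≠ -1 := by omega
        have m1 : ((j+1-k : ℤ), (j : ℤ)) ∈ {q : ℤ × ℤ | q.1^2 + (k+k)*q.1 + (k*k - (2*j+1)) = q.2^2} := by
          simp only [Set.mem_setOf_eq]; ring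
        have m2 : ((j+1-k : ℤ), (-j : ℤ)) ∈ {q : ℤ × ℤ | q.1^2 + (k+k)*q.1 + (k*k - (2*j+1)) = q.2^2} := by
          simp only [Set.mem_setOf_eq]; ring
        have m3 : ((-j-1-k : ℤ), (j : ℤ)) ∈ {q : ℤ × ℤ | q.1^2 + (k+k)*q.1 + (k*k - (2*j+1)) = q.2^2} := by
          simp only [Set.mem_setOf_eq]; ring
        exact h3ne m1 m2 m3
          (by intro hq; rw [Prod.mk.injEq] at hq; omega)
          (by intro hq; rw [Prod.mk.injEq] at hq; omega)
          (by intro hq; rw [Prod.mk.injEq] at hq; omega) hn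
      · -- E = 4F
        obtain ⟨F, rfl⟩ : ∃ F, E = 4*F := ⟨E/4, by omega⟩
        have hF0 : F ≠ 0 := by omega
        have hF1 : F ≠ 1 := by omega
        have hFm1 : F ≠ -1 := by omega
        have m1 : ((F+1-k : ℤ), (F-1 : ℤ)) ∈ {q : ℤ × ℤ | q.1^2 + (k+k)*q.1 + (k*k - 4*F) = q.2^2} := by
          simp only [Set.mem_setOf_eq]; ring
        have m2 : ((F+1-k : ℤ), (1-F : ℤ)) ∈ {q : ℤ × ℤ | q.1^2 + (k+k)*q.1 + (k*k - 4*F) = q.2^2} := by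
          simp only [Set.mem_setOf_eq]; ring
        have m3 : ((-F-1-k : ℤ), (F-1 : ℤ)) ∈ {q : ℤ × ℤ | q.1^2 + (k+k)*q.1 + (k*k - 4*F) = q.2^2} := by
          simp only [Set.mem_setOf_eq]; ring
        exact h3ne m1 m2 m3
          (by intro hq; rw [Prod.mk.injEq] at hq; omega)
          (by intro hq; rw [Prod.mk.injEq] at hq; omega)
          (by intro hq; rw [Prod.mk.injEq] at hq; omega) hn
      · -- E ≡ 2 mod 4 : empty set
        obtain ⟨p, q, hpq, hS⟩ := Set.ncard_eq_two.mp hn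
        have hp : p ∈ {q : ℤ × ℤ | q.1^2 + (k+k)*q.1 + (k*k - E) = q.2^2} := by
          rw [hS]; exact Set.mem_insert _ _
        have hp' : p.1^2 + (k+k)*p.1 + (k*k - E) = p.2^2 := hp
        exact mod4ne2 (p.1 + k) p.2 E (by linear_combination hp') (by omega)
    · -- b = 2k+1
      obtain ⟨m, rfl⟩ : ∃ m, c = k*k + k - m := ⟨k*k + k - c, by ring⟩
      have hm0 : m ≠ 0 := fun hE => e1 (by subst hE; ring)
      have m1 : ((m-k : ℤ), (m : ℤ)) ∈ {q : ℤ × ℤ | q.1^2 + (2*k+1)*q.1 + (k*k + k - m) = q.2^2} := by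
        simp only [Set.mem_setOf_eq]; ring
      have m2 : ((m-k : ℤ), (-m : ℤ)) ∈ {q : ℤ × ℤ | q.1^2 + (2*k+1)*q.1 + (k*k + k - m) = q.2^2} := by
        simp only [Set.mem_setOf_eq]; ring
      have m3 : ((-k-m-1 : ℤ), (m : ℤ)) ∈ {q : ℤ × ℤ | q.1^2 + (2*k+1)*q.1 + (k*k + k - m) = q.2^2} := by
        simp only [Set.mem_setOf_eq]; ring
      exact h3ne m1 m2 m3
        (by intro hq; rw [Prod.mk.injEq] at hq; omega)
        (by intro hq; rw [Prod.mk.injEq] at hq; omega)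
        (by intro hq; rw [Prod.mk.injEq] at hq; omega) hn
  · intro hD
    rcases hD with hD | hD | hD | hD | hD
    · -- D = 1
      rcases Int.even_or_odd b with ⟨k, rfl⟩ | ⟨k, rfl⟩
      · exfalso
        obtain ⟨K, hK⟩ : ∃ K, 4*K - 4*c = 1 := ⟨k*k, by linear_combination hD⟩
        omega
      · have hc : c = k*k + k := by
          have h4 : 4*c = 4*(k*k) + 4*k := by linear_combination -hD
          linarith
        subst hc
        have hset : {q : ℤ × ℤ | q.1^2 + (2*k+1)*q.1 + (k*k + k) = q.2^2}
            = {((-k : ℤ), (0 : ℤ)), ((-k-1 : ℤ), (0 : ℤ))} := by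
          ext ⟨x, y⟩
          simp only [Set.mem_setOf_eq, Set.mem_insert_iff, Set.mem_singleton_iff, Prod.mk.injEq]
          constructor
          · intro hxy
            have h1 : (2*x + 2*k + 1 - 2*y) * (2*x + 2*k + 1 + 2*y) = 1 := by
              linear_combination 4*hxy
            rcases Int.mul_eq_one_iff_eq_one_or_neg_one.mp h1 with ⟨u, v⟩ | ⟨u, v⟩ <;> omega
          · rintro (⟨rfl, rfl⟩ | ⟨rfl, rfl⟩) <;> ring
        rw [hset]
        exact Set.ncard_pair (by intro hq; rw [Prod.mk.injEq] at hq; omega)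
    · -- D = 4
      rcases Int.even_or_odd b with ⟨k, rfl⟩ | ⟨k, rfl⟩
      · have hc : c = k*k - 1 := by
          have h4 : 4*c = 4*(k*k) - 4 := by linear_combination -hD
          linarith
        subst hc
        have hset : {q : ℤ × ℤ | q.1^2 + (k+k)*q.1 + (k*k - 1) = q.2^2}
            = {((1-k : ℤ), (0 : ℤ)), ((-1-k : ℤ), (0 : ℤ))} := by
          ext ⟨x, y⟩
          simp only [Set.mem_setOf_eq, Set.mem_insert_iff, Set.mem_singleton_iff, Prod.mk.injEq]
          constructor
          · intro hxy
            have h1 : (x + k - y) * (x + k + y) = 1 := by linear_combination hxy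
            rcases Int.mul_eq_one_iff_eq_one_or_neg_one.mp h1 with ⟨u, v⟩ | ⟨u, v⟩ <;> omega
          · rintro (⟨rfl, rfl⟩ | ⟨rfl, rfl⟩) <;> ring
        rw [hset]
        exact Set.ncard_pair (by intro hq; rw [Prod.mk.injEq] at hq; omega)
      · exfalso
        obtain ⟨K, hK⟩ : ∃ K, 4*K + 1 - 4*c = 4 := ⟨k*k + k, by linear_combination hD⟩
        omega
    · -- D = 16
      rcases Int.even_or_odd b with ⟨k, rfl⟩ | ⟨k, rfl⟩
      · have hc : c = k*k - 4 := by
          have h4 : 4*c = 4*(k*k) - 16 := by linear_combination -hD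
          linarith
        subst hc
        have hset : {q : ℤ × ℤ | q.1^2 + (k+k)*q.1 + (k*k - 4) = q.2^2}
            = {((2-k : ℤ), (0 : ℤ)), ((-2-k : ℤ), (0 : ℤ))} := by
          ext ⟨x, y⟩
          simp only [Set.mem_setOf_eq, Set.mem_insert_iff, Set.mem_singleton_iff, Prod.mk.injEq]
          constructor
          · intro hxy
            have h1 : (x + k)^2 - y^2 = 4 := by linear_combination hxy
            obtain ⟨h2, h3⟩ := sqd4 (x + k) y h1
            omega
          · rintro (⟨rfl, rfl⟩ | ⟨rfl, rfl⟩) <;> ring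
        rw [hset]
        exact Set.ncard_pair (by intro hq; rw [Prod.mk.injEq] at hq; omega)
      · exfalso
        obtain ⟨K, hK⟩ : ∃ K, 4*K + 1 - 4*c = 16 := ⟨k*k + k, by linear_combination hD⟩
        omega
    · -- D = -4
      rcases Int.even_or_odd b with ⟨k, rfl⟩ | ⟨k, rfl⟩
      · have hc : c = k*k + 1 := by
          have h4 : 4*c = 4*(k*k) + 4 := by linear_combination -hD
          linarith
        subst hc
        have hset : {q : ℤ × ℤ | q.1^2 + (k+k)*q.1 + (k*k + 1) = q.2^2}
            = {((-k : ℤ), (1 : ℤ)), ((-k : ℤ), (-1 : ℤ))} := by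
          ext ⟨x, y⟩
          simp only [Set.mem_setOf_eq, Set.mem_insert_iff, Set.mem_singleton_iff, Prod.mk.injEq]
          constructor
          · intro hxy
            have h1 : y^2 - (x + k)^2 = 1 := by linear_combination -hxy
            obtain ⟨h2, h3⟩ := sqd1 y (x + k) h1
            omega
          · rintro (⟨rfl, rfl⟩ | ⟨rfl, rfl⟩) <;> ring
        rw [hset]
        exact Set.ncard_pair (by intro hq; rw [Prod.mk.injEq] at hq; omega)
      · exfalso
        obtain ⟨K, hK⟩ : ∃ K, 4*K + 1 - 4*c = -4 := ⟨k*k + k, by linear_combination hD⟩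
        omega
    · -- D = -16
      rcases Int.even_or_odd b with ⟨k, rfl⟩ | ⟨k, rfl⟩
      · have hc : c = k*k + 4 := by
          have h4 : 4*c = 4*(k*k) + 16 := by linear_combination -hD
          linarith
        subst hc
        have hset : {q : ℤ × ℤ | q.1^2 + (k+k)*q.1 + (k*k + 4) = q.2^2}
            = {((-k : ℤ), (2 : ℤ)), ((-k : ℤ), (-2 : ℤ))} := by
          ext ⟨x, y⟩
          simp only [Set.mem_setOf_eq, Set.mem_insert_iff, Set.mem_singleton_iff, Prod.mk.injEq]
          constructor
          · intro hxy
            have h1 : y^2 - (x + k)^2 = 4 := by linear_combination -hxy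
            obtain ⟨h2, h3⟩ := sqd4 y (x + k) h1
            omega
          · rintro (⟨rfl, rfl⟩ | ⟨rfl, rfl⟩) <;> ring
        rw [hset]
        exact Set.ncard_pair (by intro hq; rw [Prod.mk.injEq] at hq; omega)
      · exfalso
        obtain ⟨K, hK⟩ : ∃ K, 4*K + 1 - 4*c = -16 := ⟨k*k + k, by linear_combination hD⟩
        omega
end
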